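/- Correlated equilibria of the single-item γ-hybrid auction without overbidding are efficient: Let γ ∈ (0,1], n ≥ 2, valuations v : Fin n → ℝ≥0. Let μ be a probability measure on bid profiles supported on no-overbidding profiles (b_i ≤ v_i for all i, μ-a.s.), with all utilities μ-integrable, satisfying the correlated equilibrium condition: for every bidder i and every measurable deviation map m_i : ℝ≥0 → ℝ≥0 with m_i(t) ≤ v_i for all t, E_{b∼μ}[u_i(b)] ≥ E_{b∼μ}[u_i(m_i(b_i), b_{−i})]. Then μ-almost surely the winner's valuation equals max_i v_i; in particular E_{b∼μ}[SW(b)] = max_i v_i. -/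

import Mathlib

/-!
If bidder `k` deviates by raising every bid below `c ≤ v k` to `c`, it wins every profile in
which all bids were below `c` and it was losing, gaining at least `v k - c` there, while on the
profiles it was already winning its payment grows only by `γ` times the raise. If the winning
bid is a.s. at least `ℓ`, the correlated equilibrium condition therefore gives
`(v k - c) μ(all bids < c, k loses) ≤ γ (c - ℓ) μ(all bids < c, k wins)`.
Adding this inequality for the two bidders of highest value shows that `μ(all bids < c) = 0`
as soon as `c - ℓ < v₂ - c`, where `v₂` is the second highest value; by a supremum argument
the winning bid is therefore a.s. at least `v₂`. Every other bidder can only win with a bid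
`≤ v₂`, so applying the inequality once more to the bidder of highest value, with `ℓ = v₂` and
`c` close to `v₂`, shows that a bidder of lower value a.s. never wins.
-/

open MeasureTheory Finset Function
open scoped NNReal

namespace HybridAuction

variable {ι : Type*}

def allBidsBelow (c : ℝ≥0) : Set (ι → ℝ≥0) :=
  Set.univ.pi fun _ => Set.Iio c

theorem allBidsBelow_mono {c d : ℝ≥0} (h : c ≤ d) :
    (allBidsBelow c : Set (ι → ℝ≥0)) ⊆ allBidsBelow d :=
  fun _ hb j _ => (hb j (Set.mem_univ j)).trans_le h

theorem measurableSet_allBidsBelow [Countable ι] (c : ℝ≥0) :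
    MeasurableSet (allBidsBelow c : Set (ι → ℝ≥0)) :=
  MeasurableSet.univ_pi fun _ => measurableSet_Iio

variable [LinearOrder ι]

def IsHighestBidder (w : (ι → ℝ≥0) → ι) : Prop :=
  ∀ b, (∀ i, b i ≤ b (w b)) ∧ ∀ i, b i = b (w b) → w b ≤ i

variable {w : (ι → ℝ≥0) → ι} {b : ι → ℝ≥0} {k : ι} {t : ℝ≥0}

theorem IsHighestBidder.mem_allBidsBelow_iff (hw : IsHighestBidder w) {c : ℝ≥0} :
    b ∈ allBidsBelow c ↔ b (w b) < c := by
  simp only [allBidsBelow, Set.mem_univ_pi, Set.mem_Iio]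
  exact ⟨fun h => h _, fun h j => ((hw b).1 j).trans_lt h⟩

theorem IsHighestBidder.winner_update_of_forall_lt (hw : IsHighestBidder w)
    (h : ∀ j ≠ k, b j < t) : w (update b k t) = k := by
  by_contra hne
  have hk := (hw (update b k t)).1 k
  rw [update_self, update_of_ne hne] at hk
  exact (h _ hne).not_ge hk

theorem IsHighestBidder.winner_update_of_le (hw : IsHighestBidder w) (hk : w b = k)
    (ht : b k ≤ t) : w (update b k t) = k := by
  set b' := update b k t
  set j := w b'
  by_contra hjk
  have hj : b' j = b j := update_of_ne hjk _ _
  have htj : t ≤ b j :=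
    calc t = b' k := (update_self k t b).symm
      _ ≤ b' j := (hw b').1 k
      _ = b j := hj
  have hjk' : b j ≤ b k := hk ▸ (hw b).1 j
  have hkj : k ≤ j := hk ▸ (hw b).2 j (by rw [hk]; exact le_antisymm hjk' (ht.trans htj))
  have hjk'' : j ≤ k := (hw b').2 k <| by
    change b' k = b' j
    rw [hj]
    exact (update_self k t b).trans (le_antisymm htj (hjk'.trans ht))
  exact hjk (le_antisymm hjk'' hkj)

theorem IsHighestBidder.measure_allBidsBelow_eq_zero_of_forall_lt (hw : IsHighestBidder w)
    {μ : Measure (ι → ℝ≥0)} {s : ℝ≥0} (h : ∀ ℓ < s, μ (allBidsBelow ℓ) = 0) :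
    μ (allBidsBelow s) = 0 := by
  rcases eq_zero_or_pos s with rfl | hs
  · exact measure_mono_null (fun b hb => (not_lt_zero (hw.mem_allBidsBelow_iff.1 hb)).elim)
      measure_empty
  refine measure_mono_null (fun b hb => ?_)
    (measure_iUnion_null fun N : ℕ => h (s - 1 / (N + 1)) (tsub_lt_self hs (by positivity)))
  obtain ⟨N, hN⟩ := exists_nat_one_div_lt (tsub_pos_of_lt (hw.mem_allBidsBelow_iff.1 hb))
  exact Set.mem_iUnion.2 ⟨N, hw.mem_allBidsBelow_iff.2 (lt_tsub_comm.1 hN)⟩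

variable [Fintype ι]

def hybridPrice (γ : ℝ) (i : ι) (b : ι → ℝ≥0) : ℝ :=
  γ * b i + (1 - γ) * ((univ.erase i).sup b : ℝ≥0)

def hybridUtility (γ : ℝ) (v : ι → ℝ≥0) (w : (ι → ℝ≥0) → ι) (i : ι) (b : ι → ℝ≥0) : ℝ :=
  if w b = i then v i - hybridPrice γ i b else 0

variable {γ : ℝ} {v : ι → ℝ≥0}

theorem hybridPrice_nonneg (hγ0 : 0 ≤ γ) (hγ1 : γ ≤ 1) (i : ι) (b : ι → ℝ≥0) :
    0 ≤ hybridPrice γ i b := by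
  have := sub_nonneg.2 hγ1
  unfold hybridPrice
  positivity

theorem hybridPrice_le (hγ1 : γ ≤ 1) {i : ι} (h : ∀ j ≠ i, b j ≤ b i) :
    hybridPrice γ i b ≤ b i := by
  have hsup : (((univ.erase i).sup b : ℝ≥0) : ℝ) ≤ b i := by
    exact_mod_cast Finset.sup_le fun j hj => h j (ne_of_mem_erase hj)
  unfold hybridPrice
  nlinarith

theorem hybridUtility_le (hγ0 : 0 ≤ γ) (hγ1 : γ ≤ 1) (i : ι) (b : ι → ℝ≥0) :
    hybridUtility γ v w i b ≤ v i := by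
  unfold hybridUtility
  split_ifs
  · linarith [hybridPrice_nonneg hγ0 hγ1 i b]
  · exact NNReal.coe_nonneg _

theorem hybridUtility_nonneg (hw : IsHighestBidder w) (hγ1 : γ ≤ 1) (hb : b ≤ v)
    (i : ι) : 0 ≤ hybridUtility γ v w i b := by
  unfold hybridUtility
  split_ifs with hi
  · subst hi
    have hbv : (b (w b) : ℝ) ≤ v (w b) := by exact_mod_cast hb (w b)
    linarith [hybridPrice_le hγ1 fun j _ => (hw b).1 j]
  · rfl

theorem hybridUtility_update_of_winner (hw : IsHighestBidder w) (hk : w b = k) (ht : b k ≤ t) :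
    hybridUtility γ v w k (update b k t) = hybridUtility γ v w k b - γ * (t - b k) := by
  have hsup : (univ.erase k).sup (update b k t) = (univ.erase k).sup b :=
    Finset.sup_congr rfl fun j hj => update_of_ne (ne_of_mem_erase hj) _ _
  simp only [hybridUtility, hybridPrice, hw.winner_update_of_le hk ht, hk, if_true, update_self,
    hsup]
  ring

theorem sub_le_hybridUtility_update (hw : IsHighestBidder w) (hγ1 : γ ≤ 1)
    (h : ∀ j ≠ k, b j < t) : (v k : ℝ) - t ≤ hybridUtility γ v w k (update b k t) := by
  have hprice := hybridPrice_le (b := update b k t) hγ1 fun j hj => by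
    rw [update_self, update_of_ne hj]
    exact (h j hj).le
  rw [update_self] at hprice
  rw [hybridUtility, if_pos (hw.winner_update_of_forall_lt h)]
  linarith

theorem le_hybridUtility_update_max (hw : IsHighestBidder w) (hγ0 : 0 ≤ γ) (hγ1 : γ ≤ 1)
    (hb : b ≤ v) {c ℓ : ℝ≥0} (hℓ : ℓ ≤ b (w b)) (hcv : c ≤ v k) :
    (allBidsBelow c \ w ⁻¹' {k}).indicator (fun _ => (v k : ℝ) - c) b
        + hybridUtility γ v w k b
        - (allBidsBelow c ∩ w ⁻¹' {k}).indicator (fun _ => γ * ((c : ℝ) - ℓ)) b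
      ≤ hybridUtility γ v w k (update b k (max (b k) c)) := by
  by_cases hwk : w b = k
  · rw [Set.indicator_of_notMem (fun h => h.2 hwk), zero_add,
      hybridUtility_update_of_winner hw hwk (le_max_left _ _)]
    rcases lt_or_ge (b k) c with hlt | hge
    · have hmem : b ∈ allBidsBelow c ∩ w ⁻¹' {k} :=
        ⟨hw.mem_allBidsBelow_iff.2 (hwk ▸ hlt), hwk⟩
      have hℓk : (ℓ : ℝ) ≤ b k := by exact_mod_cast hwk ▸ hℓ
      rw [Set.indicator_of_mem hmem, max_eq_right hlt.le]
      nlinarith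
    · have hbc : b ∉ allBidsBelow c := fun h => (hw.mem_allBidsBelow_iff.1 h).not_ge (hwk ▸ hge)
      rw [Set.indicator_of_notMem (fun h => hbc h.1), max_eq_left hge]
      simp
  · have hu : hybridUtility γ v w k b = 0 := if_neg hwk
    rw [Set.indicator_of_notMem (s := allBidsBelow c ∩ w ⁻¹' {k}) (fun h => hwk h.2), hu,
      add_zero, sub_zero]
    by_cases hbc : b ∈ allBidsBelow c
    · have hbc' : ∀ j, b j < c := fun j => hbc j (Set.mem_univ j)
      rw [Set.indicator_of_mem (s := allBidsBelow c \ w ⁻¹' {k}) ⟨hbc, hwk⟩,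
        max_eq_right (hbc' k).le]
      exact sub_le_hybridUtility_update hw hγ1 fun j _ => hbc' j
    · rw [Set.indicator_of_notMem (fun h => hbc h.1)]
      exact hybridUtility_nonneg hw hγ1
        (update_le_iff.2 ⟨max_le (hb k) hcv, fun j _ => hb j⟩) k

variable [MeasurableSpace ι]

structure IsNoOverbiddingCorrelatedEquilibrium (γ : ℝ) (v : ι → ℝ≥0) (w : (ι → ℝ≥0) → ι)
    (μ : Measure (ι → ℝ≥0)) : Prop where
  ae_le : ∀ᵐ b ∂μ, b ≤ v
  integrable : ∀ i, Integrable (hybridUtility γ v w i) μ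
  integral_update_le : ∀ i (m : ℝ≥0 → ℝ≥0), Measurable m → (∀ t, m t ≤ v i) →
    ∫ b, hybridUtility γ v w i (update b i (m (b i))) ∂μ ≤ ∫ b, hybridUtility γ v w i b ∂μ

variable [MeasurableSingletonClass ι]

theorem measurable_hybridUtility (hwm : Measurable w) (i : ι) :
    Measurable (hybridUtility γ v w i) := by
  unfold hybridUtility hybridPrice
  exact Measurable.ite (hwm (measurableSet_singleton i)) (by fun_prop) measurable_const

namespace IsNoOverbiddingCorrelatedEquilibrium

variable {μ : Measure (ι → ℝ≥0)}

theorem sub_mul_measureReal_le (hμ : IsNoOverbiddingCorrelatedEquilibrium γ v w μ)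
    (hw : IsHighestBidder w) (hwm : Measurable w) (hγ0 : 0 ≤ γ) (hγ1 : γ ≤ 1)
    [IsFiniteMeasure μ] {c ℓ : ℝ≥0}
    (hcv : c ≤ v k) (hℓ : μ (allBidsBelow ℓ) = 0) :
    ((v k : ℝ) - c) * μ.real (allBidsBelow c \ w ⁻¹' {k})
      ≤ γ * ((c - ℓ) * μ.real (allBidsBelow c ∩ w ⁻¹' {k})) := by
  have hA := measurableSet_allBidsBelow (ι := ι) c
  have hW : MeasurableSet (w ⁻¹' {k}) := hwm (measurableSet_singleton k)
  set raise : ℝ≥0 → ℝ≥0 := fun t => min (max t c) (v k)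
  have hce := hμ.integral_update_le k raise (by fun_prop) fun t => min_le_right _ _
  set f := fun b => hybridUtility γ v w k (update b k (raise (b k)))
  have hf : Integrable f μ := by
    refine Integrable.mono' (integrable_const (v k : ℝ))
      ((measurable_hybridUtility hwm k).comp (by fun_prop)).aestronglyMeasurable ?_
    filter_upwards [hμ.ae_le] with b hb
    rw [Real.norm_eq_abs, abs_le]
    exact ⟨(neg_nonpos.2 (NNReal.coe_nonneg _)).trans (hybridUtility_nonneg hw hγ1
      (update_le_iff.2 ⟨min_le_right _ _, fun j _ => hb j⟩) k), hybridUtility_le hγ0 hγ1 k _⟩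
  have hlow : ∀ᵐ b ∂μ, (allBidsBelow c \ w ⁻¹' {k}).indicator (fun _ => (v k : ℝ) - c) b
      + hybridUtility γ v w k b
      - (allBidsBelow c ∩ w ⁻¹' {k}).indicator (fun _ => γ * ((c : ℝ) - ℓ)) b ≤ f b := by
    filter_upwards [hμ.ae_le, measure_eq_zero_iff_ae_notMem.1 hℓ] with b hb hbℓ
    have hraise : raise (b k) = max (b k) c := min_eq_left (max_le (hb k) hcv)
    simp only [f, hraise]
    exact le_hybridUtility_update_max hw hγ0 hγ1 hb
      (not_lt.1 (hw.mem_allBidsBelow_iff.not.1 hbℓ)) hcv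
  have hgain := (integrable_const (μ := μ) ((v k : ℝ) - c)).indicator (hA.diff hW)
  have hloss := (integrable_const (μ := μ) (γ * ((c : ℝ) - ℓ))).indicator (hA.inter hW)
  have hint := integral_mono_ae ((hgain.add (hμ.integrable k)).sub hloss) hf hlow
  rw [integral_sub' (hgain.add (hμ.integrable k)) hloss, integral_add' hgain (hμ.integrable k),
    integral_indicator_const _ (hA.diff hW), integral_indicator_const _ (hA.inter hW),
    smul_eq_mul, smul_eq_mul] at hint
  linarith

theorem measure_allBidsBelow_eq_zero_of_sub_lt
    (hμ : IsNoOverbiddingCorrelatedEquilibrium γ v w μ) (hw : IsHighestBidder w)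
    (hwm : Measurable w) (hγ0 : 0 ≤ γ) (hγ1 : γ ≤ 1) [IsFiniteMeasure μ]
    {i : ι} (hik : i ≠ k) {c ℓ : ℝ≥0} (hti : t ≤ v i) (htk : t ≤ v k) (hℓc : ℓ ≤ c)
    (hct : (c : ℝ) - ℓ < t - c) (hℓ : μ (allBidsBelow ℓ) = 0) : μ (allBidsBelow c) = 0 := by
  have hℓc' : (ℓ : ℝ) ≤ c := by exact_mod_cast hℓc
  have hti' : (t : ℝ) ≤ v i := by exact_mod_cast hti
  have htk' : (t : ℝ) ≤ v k := by exact_mod_cast htk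
  have hct' : c ≤ t := by exact_mod_cast (show (c : ℝ) ≤ t by linarith)
  have hi := hμ.sub_mul_measureReal_le hw hwm hγ0 hγ1 (hct'.trans hti) hℓ
  have hk := hμ.sub_mul_measureReal_le hw hwm hγ0 hγ1 (hct'.trans htk) hℓ
  set A : Set (ι → ℝ≥0) := allBidsBelow c
  have hcover : μ.real A ≤ μ.real (A \ w ⁻¹' {i}) + μ.real (A \ w ⁻¹' {k}) := by
    refine (measureReal_mono fun b hb => ?_).trans (measureReal_union_le _ _)
    by_cases hbi : w b = i
    · exact Or.inr ⟨hb, fun hbk => hik (hbi.symm.trans hbk)⟩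
    · exact Or.inl ⟨hb, hbi⟩
  have hdisj : μ.real (A ∩ w ⁻¹' {i}) + μ.real (A ∩ w ⁻¹' {k}) ≤ μ.real A := by
    rw [← measureReal_union (Set.disjoint_left.2 fun b hbi hbk => hik (hbi.2.symm.trans hbk.2))
      ((measurableSet_allBidsBelow c).inter (hwm (measurableSet_singleton k)))]
    exact measureReal_mono (Set.union_subset Set.inter_subset_left Set.inter_subset_left)
  have hd : (0 : ℝ) ≤ c - ℓ := sub_nonneg.2 hℓc'
  have hy : 0 ≤ μ.real (A ∩ w ⁻¹' {i}) + μ.real (A ∩ w ⁻¹' {k}) := by positivity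
  have hchain : ((t : ℝ) - c) * μ.real A ≤ ((c : ℝ) - ℓ) * μ.real A :=
    calc ((t : ℝ) - c) * μ.real A
        ≤ (t - c) * μ.real (A \ w ⁻¹' {i}) + (t - c) * μ.real (A \ w ⁻¹' {k}) := by
          rw [← mul_add]; exact mul_le_mul_of_nonneg_left hcover (by linarith)
      _ ≤ (v i - c) * μ.real (A \ w ⁻¹' {i}) + (v k - c) * μ.real (A \ w ⁻¹' {k}) := by
          gcongr
      _ ≤ γ * ((c - ℓ) * (μ.real (A ∩ w ⁻¹' {i}) + μ.real (A ∩ w ⁻¹' {k}))) := by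
          rw [mul_add, mul_add]; exact add_le_add hi hk
      _ ≤ (c - ℓ) * (μ.real (A ∩ w ⁻¹' {i}) + μ.real (A ∩ w ⁻¹' {k})) :=
          mul_le_of_le_one_left (mul_nonneg hd hy) hγ1
      _ ≤ (c - ℓ) * μ.real A := mul_le_mul_of_nonneg_left hdisj hd
  have hA : μ.real A ≤ 0 := by nlinarith [measureReal_nonneg (μ := μ) (s := A)]
  exact (measureReal_eq_zero_iff).1 (hA.antisymm measureReal_nonneg)

theorem measure_allBidsBelow_eq_zero (hμ : IsNoOverbiddingCorrelatedEquilibrium γ v w μ)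
    (hw : IsHighestBidder w) (hwm : Measurable w) (hγ0 : 0 ≤ γ) (hγ1 : γ ≤ 1)
    [IsFiniteMeasure μ] {i : ι} (hik : i ≠ k)
    (hti : t ≤ v i) (htk : t ≤ v k) : μ (allBidsBelow t) = 0 := by
  set S := {ℓ | ℓ ≤ t ∧ μ (allBidsBelow ℓ) = 0}
  have hS : S.Nonempty := ⟨0, zero_le, hw.measure_allBidsBelow_eq_zero_of_forall_lt
    fun ℓ hℓ => (not_lt_zero hℓ).elim⟩
  have hSt : sSup S ≤ t := csSup_le hS fun _ h => h.1
  have hsup : μ (allBidsBelow (sSup S)) = 0 :=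
    hw.measure_allBidsBelow_eq_zero_of_forall_lt fun ℓ hℓ => by
      obtain ⟨x, hx, hℓx⟩ := exists_lt_of_lt_csSup hS hℓ
      exact measure_mono_null (allBidsBelow_mono hℓx.le) hx.2
  obtain heq | hlt := hSt.eq_or_lt
  · rwa [← heq]
  set c : ℝ≥0 := (2 * sSup S + t) / 3
  have hlt' : ((sSup S : ℝ≥0) : ℝ) < t := hlt
  have hc : (c : ℝ) = (2 * sSup S + t) / 3 := by simp [c]
  have hcS : c ∈ S := ⟨by rw [← NNReal.coe_le_coe, hc]; linarith,
    hμ.measure_allBidsBelow_eq_zero_of_sub_lt hw hwm hγ0 hγ1 hik hti htk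
      (by rw [← NNReal.coe_le_coe, hc]; linarith) (by rw [hc]; linarith) hsup⟩
  have := le_csSup ⟨t, fun _ h => h.1⟩ hcS
  rw [← NNReal.coe_le_coe, hc] at this
  exfalso
  linarith

theorem mul_measureReal_value_winner_lt_le
    (hμ : IsNoOverbiddingCorrelatedEquilibrium γ v w μ) (hw : IsHighestBidder w)
    (hwm : Measurable w) (hγ0 : 0 ≤ γ) (hγ1 : γ ≤ 1)
    [IsProbabilityMeasure μ] {i : ι} (hother : ∀ j ≠ i, v j ≤ t)
    (ht : μ (allBidsBelow t) = 0) {c : ℝ≥0} (htc : t < c) (hci : c ≤ v i) :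
    ((v i : ℝ) - c) * μ.real {b | v (w b) < v i} ≤ c - t := by
  have hsub : μ.real {b | v (w b) < v i} ≤ μ.real (allBidsBelow c \ w ⁻¹' {i}) := by
    refine ENNReal.toReal_mono (measure_ne_top _ _) (measure_mono_ae ?_)
    filter_upwards [hμ.ae_le] with b hb hbv
    have hwi : w b ≠ i := fun h => (lt_irrefl (v i)) (h ▸ hbv)
    exact ⟨hw.mem_allBidsBelow_iff.2 (((hb _).trans (hother _ hwi)).trans_lt htc), hwi⟩
  have hci' : (0 : ℝ) ≤ v i - c := sub_nonneg.2 (by exact_mod_cast hci)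
  have htc' : (0 : ℝ) ≤ c - t := sub_nonneg.2 (by exact_mod_cast htc.le)
  calc ((v i : ℝ) - c) * μ.real {b | v (w b) < v i}
      ≤ (v i - c) * μ.real (allBidsBelow c \ w ⁻¹' {i}) := mul_le_mul_of_nonneg_left hsub hci'
    _ ≤ γ * ((c - t) * μ.real (allBidsBelow c ∩ w ⁻¹' {i})) :=
        hμ.sub_mul_measureReal_le hw hwm hγ0 hγ1 hci ht
    _ ≤ c - t := (mul_le_of_le_one_left (mul_nonneg htc' measureReal_nonneg) hγ1).trans
        (mul_le_of_le_one_right htc' measureReal_le_one)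

theorem ae_value_winner_eq (hμ : IsNoOverbiddingCorrelatedEquilibrium γ v w μ)
    (hw : IsHighestBidder w) (hwm : Measurable w) (hγ0 : 0 ≤ γ) (hγ1 : γ ≤ 1)
    [IsProbabilityMeasure μ] {i : ι}
    (hmax : ∀ j, v j ≤ v i) (hti : t ≤ v i) (hother : ∀ j ≠ i, v j ≤ t)
    (ht : μ (allBidsBelow t) = 0) : ∀ᵐ b ∂μ, v (w b) = v i := by
  obtain rfl | hlt := hti.eq_or_lt
  · filter_upwards [hμ.ae_le, measure_eq_zero_iff_ae_notMem.1 ht] with b hb hbt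
    exact le_antisymm (hmax _) ((not_lt.1 (hw.mem_allBidsBelow_iff.not.1 hbt)).trans (hb _))
  have hE : μ {b | v (w b) < v i} = 0 := by
    by_contra hne
    set ε := (μ {b | v (w b) < v i}).toNNReal
    have hε : 0 < (ε : ℝ) := ENNReal.toReal_pos hne (measure_ne_top _ _)
    have hε1 : (ε : ℝ) ≤ 1 := measureReal_le_one
    have hlt' : (t : ℝ) < v i := hlt
    set c : ℝ≥0 := t + (v i - t) * ε / 3
    have hc : (c : ℝ) = t + (v i - t) * ε / 3 := by simp [c, NNReal.coe_sub hti]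
    have key := hμ.mul_measureReal_value_winner_lt_le hw hwm hγ0 hγ1 hother ht (c := c)
      (by rw [← NNReal.coe_lt_coe, hc]; nlinarith) (by rw [← NNReal.coe_le_coe, hc]; nlinarith)
    change ((v i : ℝ) - c) * ε ≤ c - t at key
    rw [hc] at key
    nlinarith [mul_pos (sub_pos.2 hlt') hε]
  filter_upwards [measure_eq_zero_iff_ae_notMem.1 hE] with b hb
  exact le_antisymm (hmax _) (not_lt.1 hb)

theorem ae_value_winner_eq_sup (hμ : IsNoOverbiddingCorrelatedEquilibrium γ v w μ)
    (hw : IsHighestBidder w) (hwm : Measurable w) (hγ0 : 0 ≤ γ) (hγ1 : γ ≤ 1)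
    [IsProbabilityMeasure μ] [Nontrivial ι] :
    ∀ᵐ b ∂μ, v (w b) = univ.sup v := by
  obtain ⟨i, -, hi⟩ := exists_mem_eq_sup univ univ_nonempty v
  obtain ⟨j, hji⟩ := exists_ne i
  obtain ⟨k, hk, hk2⟩ := exists_mem_eq_sup (univ.erase i) ⟨j, mem_erase.2 ⟨hji, mem_univ j⟩⟩ v
  have hmax : ∀ j, v j ≤ v i := fun j => hi ▸ le_sup (mem_univ j)
  have h2i : (univ.erase i).sup v ≤ v i := hi ▸ sup_mono (erase_subset i univ)
  rw [hi]
  exact hμ.ae_value_winner_eq hw hwm hγ0 hγ1 hmax h2i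
    (fun j hj => le_sup (mem_erase.2 ⟨hj, mem_univ j⟩))
    (hμ.measure_allBidsBelow_eq_zero hw hwm hγ0 hγ1 (ne_of_mem_erase hk).symm h2i hk2.le)

end IsNoOverbiddingCorrelatedEquilibrium

end HybridAuction

open HybridAuction in
/-- Correlated equilibria of the single-item γ-hybrid auction without overbidding are
efficient: μ-almost surely the winner's valuation equals `max_i v_i`, and hence the
expected social welfare equals `max_i v_i`.  Here `w b` is the highest bidder (ties to
the smallest index), the winner pays `γ·b_{w b} + (1-γ)·max_{j ≠ w b} b_j`, and a
correlated equilibrium is a probability measure `μ` supported on no-overbidding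
profiles such that no bidder gains from any measurable no-overbidding deviation map. -/
theorem ce_efficient_single_item_hybrid
    (γ : ℝ) (hγ0 : 0 < γ) (hγ1 : γ ≤ 1) (n : ℕ) (hn : 2 ≤ n)
    (v : Fin n → ℝ≥0)
    (w : (Fin n → ℝ≥0) → Fin n) (hwmeas : Measurable w)
    (hw : ∀ b, (∀ i, b i ≤ b (w b)) ∧ ∀ i, b i = b (w b) → w b ≤ i)
    (u : Fin n → (Fin n → ℝ≥0) → ℝ)
    (hu : ∀ i b, u i b =
      if i = w b then
        (v (w b) : ℝ) - (γ * (b (w b) : ℝ)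
          + (1 - γ) * (((Finset.univ.erase (w b)).sup b : ℝ≥0) : ℝ))
      else 0)
    (μ : Measure (Fin n → ℝ≥0)) [IsProbabilityMeasure μ]
    (hNOB : ∀ᵐ b ∂μ, ∀ i, b i ≤ v i)
    (hIntu : ∀ i, Integrable (u i) μ)
    (hCE : ∀ i (m : ℝ≥0 → ℝ≥0), Measurable m → (∀ t, m t ≤ v i) →
      ∫ b, u i (Function.update b i (m (b i))) ∂μ ≤ ∫ b, u i b ∂μ) :
    (∀ᵐ b ∂μ, v (w b) = Finset.univ.sup v) ∧
    ∫ b, (v (w b) : ℝ) ∂μ = ((Finset.univ.sup v : ℝ≥0) : ℝ) := by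
  obtain rfl : u = hybridUtility γ v w := by
    funext i b
    rw [hu]
    by_cases h : w b = i
    · subst h; simp [hybridUtility, hybridPrice]
    · simp [hybridUtility, h, Ne.symm h]
  have hμ : IsNoOverbiddingCorrelatedEquilibrium γ v w μ := ⟨hNOB, hIntu, hCE⟩
  have : Nontrivial (Fin n) := Fin.nontrivial_iff_two_le.2 hn
  have hae := hμ.ae_value_winner_eq_sup hw hwmeas hγ0.le hγ1
  refine ⟨hae, ?_⟩
  rw [integral_congr_ae (hae.mono fun b hb => congrArg NNReal.toReal hb)]
  simp
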